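/- Let φ, ψ ∈ L¹(ℝ^{2n}) ∩ L²(ℝ^{2n}) and k,l ∈ ℤⁿ. Then for almost every (ξ,ξ') ∈ 𝕋ⁿ×𝕋ⁿ, [T^t_{(k,l)}φ, ψ](ξ,ξ') = e^{2πi(k·ξ + l·ξ')} e^{−πi k·l} [φ,ψ](ξ,ξ'). -/

import Mathlib

open MeasureTheory Complex Filter
open scoped Real ENNReal

noncomputable section

/-- Integer–real dot product. -/
def idot {n : ℕ} (k : Fin n → ℤ) (x : Fin n → ℝ) : ℝ := ∑ i, (k i : ℝ) * x i

/-- Integer–integer dot product. -/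
def iidot {n : ℕ} (k l : Fin n → ℤ) : ℤ := ∑ i, k i * l i

/-- Cast an integer vector to a real vector. -/
def intCast {n : ℕ} (k : Fin n → ℤ) : Fin n → ℝ := fun i => (k i : ℝ)

/-- The twisted translation `T^t_{(k,l)} φ` on `ℝⁿ × ℝⁿ`:
`T^t_{(k,l)}φ(x,y) = e^{πi(x·l − y·k)} φ(x−k, y−l)`. -/
def twistT {n : ℕ} (k l : Fin n → ℤ) (φ : (Fin n → ℝ) × (Fin n → ℝ) → ℂ) :
    (Fin n → ℝ) × (Fin n → ℝ) → ℂ := fun p =>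
  Complex.exp (Real.pi * Complex.I * (idot l p.1 - idot k p.2)) *
    φ (p.1 - intCast k, p.2 - intCast l)

/-- The kernel of the Weyl transform of `φ`:
`K_φ(ξ,η) = ∫_{ℝⁿ} φ(x, η−ξ) e^{πi x·(ξ+η)} dx`. -/
def weylKernel {n : ℕ} (φ : (Fin n → ℝ) × (Fin n → ℝ) → ℂ) :
    (Fin n → ℝ) × (Fin n → ℝ) → ℂ := fun p =>
  ∫ x : Fin n → ℝ, φ (x, p.2 - p.1) *
    Complex.exp (Real.pi * Complex.I * (∑ i, x i * (p.1 i + p.2 i)))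

/-- The Zak transform of a kernel `K ∈ L²(ℝ^{2n})`:
`Z K(ξ,ξ',η) = Σ_{m∈ℤⁿ} K(m+ξ,η) e^{−2πi m·ξ'}`. -/
def zakK {n : ℕ} (K : (Fin n → ℝ) × (Fin n → ℝ) → ℂ)
    (ξ ξ' η : Fin n → ℝ) : ℂ :=
  ∑' m : Fin n → ℤ, K (intCast m + ξ, η) *
    Complex.exp (-(2 * Real.pi) * Complex.I * idot m ξ')

/-- The Weyl–Zak transform of `φ`. -/
def zakW {n : ℕ} (φ : (Fin n → ℝ) × (Fin n → ℝ) → ℂ)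
    (ξ ξ' η : Fin n → ℝ) : ℂ := zakK (weylKernel φ) ξ ξ' η

/-- The bracket map `[φ,ψ](ξ,ξ') = ∫_{ℝⁿ} Z_Wφ(ξ,ξ',η) conj(Z_Wψ(ξ,ξ',η)) dη`. -/
def bracket {n : ℕ} (φ ψ : (Fin n → ℝ) × (Fin n → ℝ) → ℂ)
    (ξ ξ' : Fin n → ℝ) : ℂ :=
  ∫ η : Fin n → ℝ, zakW φ ξ ξ' η * (starRingEnd ℂ) (zakW ψ ξ ξ' η)

/-- The (real-valued) autocorrelation bracket `[φ,φ](ξ,ξ') = ∫_{ℝⁿ} |Z_Wφ(ξ,ξ',η)|² dη`. -/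
def abracket {n : ℕ} (φ : (Fin n → ℝ) × (Fin n → ℝ) → ℂ)
    (ξ ξ' : Fin n → ℝ) : ℝ :=
  ∫ η : Fin n → ℝ, ‖zakW φ ξ ξ' η‖ ^ 2

/-- The fundamental domain `[0,1)ⁿ` of `𝕋ⁿ`. -/
def box (n : ℕ) : Set (Fin n → ℝ) := Set.univ.pi fun _ => Set.Ico (0 : ℝ) 1

/-- The `L²` inner product (conjugate-linear in the second argument). -/
def L2inner {α : Type*} [MeasurableSpace α] (μ : Measure α) (f g : α → ℂ) : ℂ :=
  ∫ x, f x * (starRingEnd ℂ) (g x) ∂μ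

/-- `f` belongs to the closed linear span in `L²(ℝ^{2n})` of the twisted translates
`{T^t_{(k,l)}φ : k,l ∈ ℤⁿ}`, i.e. to `V^t(φ)`. -/
def inVt {n : ℕ} (φ f : (Fin n → ℝ) × (Fin n → ℝ) → ℂ) : Prop :=
  ∀ ε : ℝ, 0 < ε →
    ∃ (s : Finset ((Fin n → ℤ) × (Fin n → ℤ))) (a : (Fin n → ℤ) × (Fin n → ℤ) → ℂ),
      eLpNorm (fun p => f p - ∑ kl ∈ s, a kl * twistT kl.1 kl.2 φ p) 2 volume
        < ENNReal.ofReal ε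

/-!
Substituting `x ↦ x + k` in the kernel integral gives
`K_{T^t_{(k,l)}φ}(ξ,η) = e^{πi(k·l + 2k·ξ)} K_φ(ξ + l, η)`; reindexing `m ↦ m + l` in the Zak
series then turns the shift `ξ ↦ ξ + l` into the factor `e^{2πi l·ξ'}`, while `e^{2πi k·m} = 1`
and `e^{πi k·l} = e^{-πi k·l}` for integral `k·m`, `k·l`. So `Z_W(T^t_{(k,l)}φ)` is `Z_Wφ` times
the phase of the statement, which passes through the `η`-integral defining the bracket.
-/

section TwistedTranslate

variable {n : ℕ}

lemma idot_eq_dotProduct (k : Fin n → ℤ) (x : Fin n → ℝ) : idot k x = intCast k ⬝ᵥ x := rfl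

lemma intCast_dotProduct_intCast (k l : Fin n → ℤ) :
    intCast k ⬝ᵥ intCast l = (iidot k l : ℝ) := by
  simp [dotProduct, intCast, iidot]

lemma iidot_add_right (k m l : Fin n → ℤ) : iidot k (m + l) = iidot k m + iidot k l := by
  simp [iidot, mul_add, Finset.sum_add_distrib]

lemma intCast_add (m l : Fin n → ℤ) : intCast (m + l) = intCast m + intCast l := by
  ext i; simp [intCast]

lemma weylKernel_apply (φ : (Fin n → ℝ) × (Fin n → ℝ) → ℂ) (ξ η : Fin n → ℝ) :
    weylKernel φ (ξ, η) = ∫ x, φ (x, η - ξ) * exp (π * I * (x ⬝ᵥ (ξ + η) : ℝ)) := by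
  simp [weylKernel, dotProduct]

lemma weylKernel_twistT (k l : Fin n → ℤ) (φ : (Fin n → ℝ) × (Fin n → ℝ) → ℂ)
    (ξ η : Fin n → ℝ) :
    weylKernel (twistT k l φ) (ξ, η) =
      exp (π * I * (iidot k l + 2 * idot k ξ : ℝ)) * weylKernel φ (ξ + intCast l, η) := by
  rw [weylKernel_apply, ← integral_add_right_eq_self _ (intCast k), weylKernel_apply,
    ← integral_const_mul]
  refine integral_congr_ae (.of_forall fun x => ?_)
  have phase : idot l (x + intCast k) - idot k (η - ξ) + (x + intCast k) ⬝ᵥ (ξ + η)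
      = iidot k l + 2 * idot k ξ + x ⬝ᵥ (ξ + intCast l + η) := by
    simp only [idot_eq_dotProduct, dotProduct_add, add_dotProduct, dotProduct_sub,
      ← intCast_dotProduct_intCast, dotProduct_comm x (intCast l),
      dotProduct_comm (intCast l) (intCast k), dotProduct_comm (intCast k) η]
    ring
  have phase_exp : exp (π * I * (idot l (x + intCast k) - idot k (η - ξ))) *
        exp (π * I * ((x + intCast k) ⬝ᵥ (ξ + η) : ℝ))
      = exp (π * I * (iidot k l + 2 * idot k ξ : ℝ)) *
        exp (π * I * (x ⬝ᵥ (ξ + intCast l + η) : ℝ)) := by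
    rw [← exp_add, ← exp_add, ← mul_add, ← mul_add]
    exact_mod_cast congrArg (fun t : ℝ => exp (π * I * t)) phase
  simp only [twistT, add_sub_cancel_right, sub_sub]
  linear_combination φ (x, η - (ξ + intCast l)) * phase_exp

lemma zakW_twistT (k l : Fin n → ℤ) (φ : (Fin n → ℝ) × (Fin n → ℝ) → ℂ)
    (ξ ξ' η : Fin n → ℝ) :
    zakW (twistT k l φ) ξ ξ' η =
      exp (2 * π * I * (idot k ξ + idot l ξ')) * exp (-π * I * (iidot k l : ℝ)) *
        zakW φ ξ ξ' η := by
  rw [zakW, zakW, zakK, zakK, ← tsum_mul_left]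
  conv_rhs => rw [← (Equiv.addRight l).tsum_eq]
  refine tsum_congr fun m => ?_
  have shift : intCast m + ξ + intCast l = intCast (m + l) + ξ := by
    rw [intCast_add]; abel
  have phase_exp : exp (π * I * (iidot k l + 2 * idot k (intCast m + ξ) : ℝ)) *
        exp (-(2 * π) * I * idot m ξ')
      = exp (2 * π * I * (idot k ξ + idot l ξ')) * exp (-π * I * (iidot k l : ℝ)) *
        exp (-(2 * π) * I * idot (m + l) ξ') := by
    simp only [← exp_add]
    refine exp_eq_exp_iff_exists_int.mpr ⟨iidot k (m + l), ?_⟩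
    simp only [idot_eq_dotProduct, intCast_add, dotProduct_add, add_dotProduct,
      intCast_dotProduct_intCast, iidot_add_right]
    push_cast
    ring
  rw [Equiv.coe_addRight, weylKernel_twistT, shift]
  linear_combination weylKernel φ (intCast (m + l) + ξ, η) * phase_exp

lemma bracket_twistT_left_apply (k l : Fin n → ℤ) (φ ψ : (Fin n → ℝ) × (Fin n → ℝ) → ℂ)
    (ξ ξ' : Fin n → ℝ) :
    bracket (twistT k l φ) ψ ξ ξ' =
      exp (2 * π * I * (idot k ξ + idot l ξ')) * exp (-π * I * (iidot k l : ℝ)) *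
        bracket φ ψ ξ ξ' := by
  simp only [bracket, zakW_twistT, mul_assoc, integral_const_mul]

end TwistedTranslate

theorem bracket_twistT_left_general {n : ℕ} (φ ψ : (Fin n → ℝ) × (Fin n → ℝ) → ℂ)
    (k l : Fin n → ℤ) :
    ∀ᵐ q : (Fin n → ℝ) × (Fin n → ℝ) ∂(volume.restrict (box n ×ˢ box n)),
      bracket (twistT k l φ) ψ q.1 q.2
        = Complex.exp (2 * Real.pi * Complex.I * (idot k q.1 + idot l q.2)) *
            Complex.exp (-(Real.pi) * Complex.I * ((iidot k l : ℤ) : ℝ)) *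
            bracket φ ψ q.1 q.2 :=
  .of_forall fun q => bracket_twistT_left_apply k l φ ψ q.1 q.2

/-- `[T^t_{(k,l)}φ, ψ] = e^{2πi(k·ξ+l·ξ')} e^{−πi k·l} [φ,ψ]` a.e. on `𝕋ⁿ×𝕋ⁿ`. -/
theorem bracket_twistT_left {n : ℕ} (φ ψ : (Fin n → ℝ) × (Fin n → ℝ) → ℂ)
    (hφ1 : Integrable φ volume) (hφ2 : MemLp φ 2 volume)
    (hψ1 : Integrable ψ volume) (hψ2 : MemLp ψ 2 volume) (k l : Fin n → ℤ) :
    ∀ᵐ q : (Fin n → ℝ) × (Fin n → ℝ) ∂(volume.restrict (box n ×ˢ box n)),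
      bracket (twistT k l φ) ψ q.1 q.2
        = Complex.exp (2 * Real.pi * Complex.I * (idot k q.1 + idot l q.2)) *
            Complex.exp (-(Real.pi) * Complex.I * ((iidot k l : ℤ) : ℝ)) *
            bracket φ ψ q.1 q.2 :=
  bracket_twistT_left_general φ ψ k l
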